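/- arXiv:2411.17093 — 4 statements merged into one kernel-verified Lean document; each statement's English description precedes it below -/
import Mathlib

section
/- For any u, v ∈ (Z/2)^k and σ ∈ S_k, γ(u+v, σ) = p(u,v)·p(u_σ, v_σ)·γ(u,σ)·γ(v,σ). -/
/-- `p(x,y) = ∏_{i>j} (-1)^{x_i y_j}` for sequences in `(ℤ/2)^k`. -/
def pSign {k : ℕ} (x y : Fin k → ZMod 2) : ℤ :=
  ∏ q ∈ Finset.univ.filter (fun q : Fin k × Fin k => q.2 < q.1),
    (-1 : ℤ) ^ ((x q.1).val * (y q.2).val)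

/-- `γ(x,σ) = ∏_{i<j, σ(i)>σ(j)} (-1)^{x_{σ(i)} x_{σ(j)}}`. -/
def gammaSign {k : ℕ} (x : Fin k → ZMod 2) (σ : Equiv.Perm (Fin k)) : ℤ :=
  ∏ q ∈ Finset.univ.filter (fun q : Fin k × Fin k => q.1 < q.2 ∧ σ q.2 < σ q.1),
    (-1 : ℤ) ^ ((x (σ q.1)).val * (x (σ q.2)).val)

private def chi (a : ZMod 2) : ℤ := (-1) ^ a.val

private lemma chi_add (a b : ZMod 2) : chi (a + b) = chi a * chi b := by revert a b; decide

private lemma chi_mul_self (a : ZMod 2) : chi a * chi a = 1 := by revert a; decide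

private lemma chi_val (a b : ZMod 2) : (-1 : ℤ) ^ (a.val * b.val) = chi (a * b) := by
  revert a b; decide

theorem gammaSign_add (k : ℕ) (u v : Fin k → ZMod 2) (σ : Equiv.Perm (Fin k)) :
    gammaSign (u + v) σ =
      pSign u v * pSign (u ∘ σ) (v ∘ σ) * gammaSign u σ * gammaSign v σ := by
  classical
  set A : Finset (Fin k × Fin k) :=
    Finset.univ.filter (fun q : Fin k × Fin k => q.1 < q.2 ∧ σ q.2 < σ q.1) with hA
  have hgamma : ∀ x : Fin k → ZMod 2,
      gammaSign x σ = ∏ q ∈ A, chi (x (σ q.1) * x (σ q.2)) := by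
    intro x
    exact Finset.prod_congr rfl (fun q _ => chi_val _ _)
  -- the extra cross factor
  have step1 : gammaSign (u + v) σ = gammaSign u σ * gammaSign v σ *
      ((∏ q ∈ A, chi (u (σ q.1) * v (σ q.2))) *
        (∏ q ∈ A, chi (v (σ q.1) * u (σ q.2)))) := by
    rw [hgamma, hgamma, hgamma, ← Finset.prod_mul_distrib, ← Finset.prod_mul_distrib,
      ← Finset.prod_mul_distrib]
    refine Finset.prod_congr rfl fun q _ => ?_
    have h : (u + v) (σ q.1) * (u + v) (σ q.2) =
        u (σ q.1) * u (σ q.2) + (v (σ q.1) * v (σ q.2) +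
          (u (σ q.1) * v (σ q.2) + v (σ q.1) * u (σ q.2))) := by
      simp only [Pi.add_apply]; ring
    rw [h, chi_add, chi_add, chi_add]; ring
  -- the p part
  set f : Fin k × Fin k → ℤ := fun q => chi (u q.1 * v q.2) with hf
  set S : Finset (Fin k × Fin k) :=
    Finset.univ.filter (fun q : Fin k × Fin k => q.2 < q.1) with hS
  set T : Finset (Fin k × Fin k) :=
    Finset.univ.filter (fun q : Fin k × Fin k => σ.symm q.2 < σ.symm q.1) with hT
  set S1 : Finset (Fin k × Fin k) :=
    Finset.univ.filter (fun q : Fin k × Fin k => q.2 < q.1 ∧ σ.symm q.1 < σ.symm q.2) with hS1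
  set S2 : Finset (Fin k × Fin k) :=
    Finset.univ.filter (fun q : Fin k × Fin k => q.2 < q.1 ∧ σ.symm q.2 < σ.symm q.1) with hS2
  set T1 : Finset (Fin k × Fin k) :=
    Finset.univ.filter (fun q : Fin k × Fin k => q.1 < q.2 ∧ σ.symm q.2 < σ.symm q.1) with hT1
  have hpuv : pSign u v = ∏ q ∈ S, f q :=
    Finset.prod_congr rfl (fun q _ => chi_val _ _)
  have e : (Fin k × Fin k) ≃ (Fin k × Fin k) := Equiv.prodCongr σ σ
  have hpσ : pSign (u ∘ σ) (v ∘ σ) = ∏ q ∈ T, f q := by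
    have : pSign (u ∘ σ) (v ∘ σ) =
        ∏ q ∈ S, chi (u (σ q.1) * v (σ q.2)) :=
      Finset.prod_congr rfl (fun q _ => chi_val _ _)
    rw [this]
    refine Finset.prod_equiv (Equiv.prodCongr σ σ) ?_ ?_
    · intro q
      simp [hS, hT]
    · intro q _
      simp [hf]
  -- split S and T
  have splitS : ∏ q ∈ S, f q = (∏ q ∈ S1, f q) * (∏ q ∈ S2, f q) := by
    have h1 : S.filter (fun q : Fin k × Fin k => σ.symm q.1 < σ.symm q.2) = S1 := by
      rw [hS, hS1, Finset.filter_filter]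
    have h2 : S.filter (fun q : Fin k × Fin k => ¬ σ.symm q.1 < σ.symm q.2) = S2 := by
      rw [hS, hS2, Finset.filter_filter]
      refine Finset.filter_congr fun q _ => ?_
      constructor
      · rintro ⟨h1, h2⟩
        refine ⟨h1, lt_of_le_of_ne (not_lt.mp h2) ?_⟩
        intro hEq
        exact absurd (σ.symm.injective hEq ▸ rfl : q.2 = q.1) (ne_of_lt h1)
      · rintro ⟨h1, h2⟩
        exact ⟨h1, not_lt.mpr h2.le⟩
    rw [← h1, ← h2, Finset.prod_filter_mul_prod_filter_not]
  have splitT : ∏ q ∈ T, f q = (∏ q ∈ T1, f q) * (∏ q ∈ S2, f q) := by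
    have h1 : T.filter (fun q : Fin k × Fin k => q.1 < q.2) = T1 := by
      rw [hT, hT1, Finset.filter_filter]
      refine Finset.filter_congr fun q _ => ?_
      exact ⟨fun ⟨h1, h2⟩ => ⟨h2, h1⟩, fun ⟨h1, h2⟩ => ⟨h2, h1⟩⟩
    have h2 : T.filter (fun q : Fin k × Fin k => ¬ q.1 < q.2) = S2 := by
      rw [hT, hS2, Finset.filter_filter]
      refine Finset.filter_congr fun q _ => ?_
      constructor
      · rintro ⟨h1, h2⟩
        refine ⟨lt_of_le_of_ne (not_lt.mp h2) ?_, h1⟩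
        intro hEq
        exact absurd (hEq ▸ rfl : σ.symm q.2 = σ.symm q.1) (ne_of_lt h1)
      · rintro ⟨h1, h2⟩
        exact ⟨h2, not_lt.mpr h1.le⟩
    rw [← h1, ← h2, Finset.prod_filter_mul_prod_filter_not]
  -- identify the cross factors
  have hcross1 : ∏ q ∈ A, chi (u (σ q.1) * v (σ q.2)) = ∏ q ∈ S1, f q := by
    refine Finset.prod_equiv (Equiv.prodCongr σ σ) ?_ ?_
    · intro q
      simp only [hA, hS1, Finset.mem_filter, Finset.mem_univ, true_and,
        Equiv.prodCongr_apply, Prod.map, Equiv.symm_apply_apply]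
      exact ⟨fun ⟨h1, h2⟩ => ⟨h2, h1⟩, fun ⟨h1, h2⟩ => ⟨h2, h1⟩⟩
    · intro q _
      simp [hf]
  have hcross2 : ∏ q ∈ A, chi (v (σ q.1) * u (σ q.2)) = ∏ q ∈ T1, f q := by
    refine Finset.prod_equiv ((Equiv.prodCongr σ σ).trans (Equiv.prodComm _ _)) ?_ ?_
    · intro q
      simp only [hA, hT1, Finset.mem_filter, Finset.mem_univ, true_and,
        Equiv.trans_apply, Equiv.prodCongr_apply, Equiv.prodComm_apply, Prod.map,
        Prod.swap, Equiv.symm_apply_apply]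
      exact ⟨fun ⟨h1, h2⟩ => ⟨h2, h1⟩, fun ⟨h1, h2⟩ => ⟨h2, h1⟩⟩
    · intro q _
      simp [hf, mul_comm]
  have hS2sq : (∏ q ∈ S2, f q) * (∏ q ∈ S2, f q) = 1 := by
    rw [← Finset.prod_mul_distrib]
    exact Finset.prod_eq_one fun q _ => chi_mul_self _
  rw [step1, hpuv, hpσ, splitS, splitT, hcross1, hcross2]
  calc gammaSign u σ * gammaSign v σ * ((∏ q ∈ S1, f q) * ∏ q ∈ T1, f q)
      = (∏ q ∈ S1, f q) * (∏ q ∈ T1, f q) *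
          ((∏ q ∈ S2, f q) * (∏ q ∈ S2, f q)) * gammaSign u σ * gammaSign v σ := by
        rw [hS2sq]; ring
    _ = (∏ q ∈ S1, f q) * (∏ q ∈ S2, f q) * ((∏ q ∈ T1, f q) * (∏ q ∈ S2, f q)) *
          gammaSign u σ * gammaSign v σ := by ring
end

section
/- For any J ∈ (Z/2)^{2k} and any g ∈ S_k, γ(J^o + J^e, g) = γ(J, ḡ), where J^o = (J_1, J_3, ..., J_{2k−1}), J^e = (J_2, J_4, ..., J_{2k}), and ḡ ∈ S_{2k} is given by ḡ(2s−1)=2g(s)−1, ḡ(2s)=2g(s). -/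
/-- The equivalence `Fin k × Fin 2 ≃ Fin (2*k)` sending (zero-based) `(s, r)` to `2*s + r`. -/
def pairEquiv (k : ℕ) : Fin k × Fin 2 ≃ Fin (2 * k) :=
  finProdFinEquiv.trans (finCongr (Nat.mul_comm k 2))

/-- For `g ∈ S_k`, the permutation `ḡ ∈ S_{2k}` with `ḡ(2s−1) = 2g(s)−1` and `ḡ(2s) = 2g(s)`. -/
def barPerm {k : ℕ} (g : Equiv.Perm (Fin k)) : Equiv.Perm (Fin (2 * k)) :=
  (pairEquiv k).permCongr (Equiv.prodCongr g (Equiv.refl (Fin 2)))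

lemma pairEquiv_val (k : ℕ) (s : Fin k) (r : Fin 2) :
    ((pairEquiv k (s, r)) : ℕ) = r + 2 * s := by
  simp [pairEquiv, finProdFinEquiv]

lemma barPerm_apply (k : ℕ) (g : Equiv.Perm (Fin k)) (s : Fin k) (r : Fin 2) :
    barPerm g (pairEquiv k (s, r)) = pairEquiv k (g s, r) := by
  simp [barPerm]

lemma pairEquiv_lt_iff (k : ℕ) (s1 s2 : Fin k) (r1 r2 : Fin 2) :
    pairEquiv k (s1, r1) < pairEquiv k (s2, r2) ↔ s1 < s2 ∨ (s1 = s2 ∧ r1 < r2) := by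
  have h1 := r1.isLt; have h2 := r2.isLt
  simp only [Fin.lt_def, pairEquiv_val, Fin.ext_iff]
  omega

lemma zmodlem : ∀ a b c d : ZMod 2,
    ((-1:ℤ)^(a.val*c.val) * (-1)^(a.val*d.val)) * ((-1)^(b.val*c.val) * (-1)^(b.val*d.val))
      = (-1:ℤ)^(((a+b).val) * ((c+d).val)) := by decide

lemma cond_iff (k : ℕ) (g : Equiv.Perm (Fin k)) (s1 s2 : Fin k) (r1 r2 : Fin 2) :
    (pairEquiv k (s1, r1) < pairEquiv k (s2, r2) ∧
      barPerm g (pairEquiv k (s2, r2)) < barPerm g (pairEquiv k (s1, r1))) ↔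
    (s1 < s2 ∧ g s2 < g s1) := by
  rw [barPerm_apply, barPerm_apply, pairEquiv_lt_iff, pairEquiv_lt_iff]
  constructor
  · rintro ⟨h1 | ⟨rfl, h1⟩, h2 | ⟨h2, h3⟩⟩
    · exact ⟨h1, h2⟩
    · exfalso; have : s2 = s1 := g.injective h2
      exact absurd (this ▸ h1) (lt_irrefl _)
    · exact absurd h2 (lt_irrefl _)
    · exact absurd h3 (not_lt.2 h1.le)
  · rintro ⟨h1, h2⟩
    exact ⟨Or.inl h1, Or.inl h2⟩

theorem gammaSign_odd_even_add (k : ℕ) (J : Fin (2 * k) → ZMod 2) (g : Equiv.Perm (Fin k)) :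
    gammaSign (fun i => J (pairEquiv k (i, 0)) + J (pairEquiv k (i, 1))) g =
      gammaSign J (barPerm g) := by
  classical
  unfold gammaSign
  have step : (∏ q ∈ Finset.univ.filter
        (fun q : Fin (2*k) × Fin (2*k) => q.1 < q.2 ∧ barPerm g q.2 < barPerm g q.1),
        (-1:ℤ) ^ ((J (barPerm g q.1)).val * (J (barPerm g q.2)).val))
      = ∏ p ∈ (Finset.univ.filter (fun q : Fin k × Fin k => q.1 < q.2 ∧ g q.2 < g q.1)) ×ˢ
          (Finset.univ : Finset (Fin 2 × Fin 2)),
          (-1:ℤ) ^ ((J (pairEquiv k (g p.1.1, p.2.1))).val *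
            (J (pairEquiv k (g p.1.2, p.2.2))).val) := by
    refine Finset.prod_nbij'
      (fun q => (((((pairEquiv k).symm q.1).1, ((pairEquiv k).symm q.2).1)),
        ((((pairEquiv k).symm q.1).2, ((pairEquiv k).symm q.2).2))))
      (fun p => (pairEquiv k (p.1.1, p.2.1), pairEquiv k (p.1.2, p.2.2))) ?_ ?_ ?_ ?_ ?_
    · rintro ⟨q1, q2⟩ hq
      simp only [Finset.mem_filter, Finset.mem_univ, true_and] at hq
      simp only [Finset.mem_product, Finset.mem_filter, Finset.mem_univ, true_and, and_true]
      have e1 : q1 = pairEquiv k (((pairEquiv k).symm q1).1, ((pairEquiv k).symm q1).2) := by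
        simp
      have e2 : q2 = pairEquiv k (((pairEquiv k).symm q2).1, ((pairEquiv k).symm q2).2) := by
        simp
      rw [e1, e2, cond_iff] at hq
      exact hq
    · rintro ⟨⟨s1, s2⟩, ⟨r1, r2⟩⟩ hp
      simp only [Finset.mem_product, Finset.mem_filter, Finset.mem_univ, true_and,
        and_true] at hp
      simp only [Finset.mem_filter, Finset.mem_univ, true_and]
      exact (cond_iff k g s1 s2 r1 r2).2 hp
    · rintro ⟨q1, q2⟩ _
      simp
    · rintro ⟨⟨s1, s2⟩, ⟨r1, r2⟩⟩ _
      simp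
    · rintro ⟨q1, q2⟩ hq
      simp only
      have e1 : q1 = pairEquiv k (((pairEquiv k).symm q1).1, ((pairEquiv k).symm q1).2) := by
        simp
      have e2 : q2 = pairEquiv k (((pairEquiv k).symm q2).1, ((pairEquiv k).symm q2).2) := by
        simp
      have h1 := barPerm_apply k g ((pairEquiv k).symm q1).1 ((pairEquiv k).symm q1).2
      have h2 := barPerm_apply k g ((pairEquiv k).symm q2).1 ((pairEquiv k).symm q2).2
      rw [← e1] at h1
      rw [← e2] at h2
      rw [h1, h2]
  rw [step, Finset.prod_product]
  refine Finset.prod_congr rfl ?_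
  rintro ⟨s1, s2⟩ _
  rw [← Finset.univ_product_univ, Finset.prod_product]
  simp only
  rw [Fin.prod_univ_two]
  conv_lhs => rw [show (0 : Fin 2) = (0 : Fin 2) from rfl]
  rw [Fin.prod_univ_two, Fin.prod_univ_two]
  exact (zmodlem _ _ _ _).symm
end

section
/- For each k ≥ 1, the following identity holds: ∑ (2^k k!)/(∏_{i=1}^k (2i)^{λ_i} λ_i!) = (2k−1)!!, where the sum is over all sequences (λ_1,...,λ_k) of non-negative integers with λ_1 + 2λ_2 + ... + kλ_k = k. -/
/-!
Dividing by `2^k k!`, the claim is that `S k := ∑_λ 1 / ∏ᵢ (2i)^{λᵢ} λᵢ!` equals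
`(2k-1)!! / (2k)!!`. Weighting each partition of `n` by `n = ∑ᵢ i λᵢ` and removing one part
`i` from it (which turns the factor `i λᵢ / ((2i)^{λᵢ} λᵢ!)` into `1 / (2 (2i)^{λᵢ-1} (λᵢ-1)!)`)
gives the recurrence `2n S n = ∑_{j<n} S j`. The ratio `(2n-1)!! / (2n)!!` satisfies the same
recurrence, since `(2n+2) r(n+1) = (2n+1) r n`, and both start at `1`.
-/

open Finset Nat

namespace PartitionDoubleFactorial

def weight (m : Multiset ℕ) : ℚ :=
  ∏ j ∈ m.toFinset, (2 * j : ℚ) ^ m.count j * (m.count j)!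

theorem weight_eq_prod_of_subset {m : Multiset ℕ} {s : Finset ℕ} (hs : m.toFinset ⊆ s) :
    weight m = ∏ j ∈ s, (2 * j : ℚ) ^ m.count j * (m.count j)! := by
  refine prod_subset hs fun j _ hj => ?_
  rw [Multiset.count_eq_zero_of_notMem (by simpa using hj)]
  simp

theorem weight_cons (a : ℕ) (m : Multiset ℕ) :
    weight (a ::ₘ m) = 2 * a * (m.count a + 1) * weight m := by
  set s := (a ::ₘ m).toFinset
  have ha : a ∈ s := by simp [s]
  rw [weight_eq_prod_of_subset (subset_refl s),
    weight_eq_prod_of_subset (Multiset.toFinset_subset.mpr (Multiset.subset_cons m a)),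
    ← mul_prod_erase s _ ha, ← mul_prod_erase s _ ha]
  have hrest : ∀ j ∈ s.erase a, (2 * j : ℚ) ^ (a ::ₘ m).count j * ((a ::ₘ m).count j)! =
      (2 * j : ℚ) ^ m.count j * (m.count j)! := fun _ hj => by
    rw [Multiset.count_cons_of_ne (ne_of_mem_erase hj)]
  rw [prod_congr rfl hrest, Multiset.count_cons_self, pow_succ, factorial_succ]
  push_cast
  ring

theorem toFinset_parts_subset_range {n : ℕ} (P : n.Partition) :
    P.parts.toFinset ⊆ range (n + 1) := fun _ hj =>
  mem_range_succ_iff.mpr (P.le_of_mem_parts (Multiset.mem_toFinset.mp hj))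

theorem prod_range_eq_weight {n : ℕ} (P : n.Partition) :
    ∏ i ∈ range n, (2 * ((i : ℚ) + 1)) ^ P.parts.count (i + 1) * (P.parts.count (i + 1))! =
      weight P.parts := by
  have h0 : P.parts.count 0 = 0 :=
    Multiset.count_eq_zero_of_notMem fun h => (P.parts_pos h).false
  rw [weight_eq_prod_of_subset (toFinset_parts_subset_range P), prod_range_succ', h0]
  push_cast
  simp

theorem cast_eq_sum_range_mul_count {n : ℕ} (P : n.Partition) :
    (n : ℚ) = ∑ i ∈ range n, ((i : ℚ) + 1) * P.parts.count (i + 1) := by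
  have h := sum_multiset_count_of_subset P.parts _ (toFinset_parts_subset_range P)
  rw [P.parts_sum, sum_range_succ'] at h
  have hq := congrArg (Nat.cast (R := ℚ)) h
  push_cast at hq
  simpa [mul_comm] using hq

noncomputable def partitionSum (n : ℕ) : ℚ :=
  ∑ P : n.Partition, (weight P.parts)⁻¹

theorem sum_mul_count_mul_inv_weight {n a : ℕ} (ha1 : 1 ≤ a) (ha : a ≤ n) :
    ∑ P : n.Partition, (a * P.parts.count a : ℚ) * (weight P.parts)⁻¹ =
      partitionSum (n - a) / 2 := by
  set g : n.Partition → ℚ := fun P => (a * P.parts.count a : ℚ) * (weight P.parts)⁻¹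
  have hout : ∑ P : {P : n.Partition // a ∉ P.parts}, g P = 0 :=
    sum_eq_zero fun P _ => by simp [g, Multiset.count_eq_zero_of_notMem P.2]
  have hcons (Q : (n - a).Partition) : g ((Nat.Partition.partitionWithPartEquiv ha1 ha).symm Q) =
      (weight Q.parts)⁻¹ / 2 := by
    simp only [g, Nat.Partition.partitionWithPartEquiv_symm_apply_parts, weight_cons,
      Multiset.count_cons_self, cast_add, cast_one]
    field_simp
  rw [← Fintype.sum_subtype_add_sum_subtype (fun P : n.Partition => a ∈ P.parts) g, hout,
    add_zero, ← (Nat.Partition.partitionWithPartEquiv ha1 ha).symm.sum_comp, partitionSum,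
    sum_div]
  exact sum_congr rfl fun Q _ => hcons Q

theorem two_mul_mul_partitionSum (n : ℕ) :
    2 * n * partitionSum n = ∑ j ∈ range n, partitionSum j := by
  calc 2 * n * partitionSum n
      = 2 * ∑ P : n.Partition, (n : ℚ) * (weight P.parts)⁻¹ := by
        simp only [partitionSum, mul_sum, mul_assoc]
    _ = 2 * ∑ i ∈ range n, ∑ P : n.Partition,
          ((i + 1 : ℕ) * P.parts.count (i + 1) : ℚ) * (weight P.parts)⁻¹ := by
        rw [sum_comm]
        congr 1
        refine sum_congr rfl fun P _ => ?_
        rw [← sum_mul]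
        push_cast
        rw [← cast_eq_sum_range_mul_count]
    _ = ∑ i ∈ range n, partitionSum (n - 1 - i) := by
        rw [mul_sum]
        refine sum_congr rfl fun i hi => ?_
        rw [sum_mul_count_mul_inv_weight (le_add_left 1 i) (mem_range.mp hi), Nat.sub_sub,
          add_comm 1 i]
        ring
    _ = ∑ j ∈ range n, partitionSum j := sum_range_reflect _ n

noncomputable def doubleFactorialRatio (n : ℕ) : ℚ := ((2 * n - 1)‼ : ℚ) / (2 * n)‼

theorem two_mul_succ_mul_doubleFactorialRatio_succ (n : ℕ) :
    2 * (n + 1) * doubleFactorialRatio (n + 1) = (2 * n + 1) * doubleFactorialRatio n := by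
  rw [doubleFactorialRatio, doubleFactorialRatio, show 2 * (n + 1) - 1 = 2 * n + 1 by omega,
    doubleFactorial_add_one, mul_add_one, doubleFactorial_add_two]
  push_cast
  field_simp

theorem two_mul_mul_doubleFactorialRatio (n : ℕ) :
    2 * n * doubleFactorialRatio n = ∑ j ∈ range n, doubleFactorialRatio j := by
  induction n with
  | zero => simp
  | succ n ih =>
    rw [sum_range_succ, ← ih]
    push_cast
    rw [two_mul_succ_mul_doubleFactorialRatio_succ]
    ring

theorem eq_of_two_mul_mul_eq_sum_range {a b : ℕ → ℚ} (h0 : a 0 = b 0)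
    (ha : ∀ n, 2 * n * a n = ∑ j ∈ range n, a j) (hb : ∀ n, 2 * n * b n = ∑ j ∈ range n, b j) :
    a = b := by
  funext n
  induction n using Nat.strong_induction_on with
  | _ n ih =>
    rcases n with _ | n
    · exact h0
    · have h := ha (n + 1)
      rw [sum_congr rfl fun j hj => ih j (mem_range.mp hj), ← hb] at h
      exact mul_left_cancel₀ (by positivity) h

theorem partitionSum_eq_doubleFactorialRatio : partitionSum = doubleFactorialRatio :=
  eq_of_two_mul_mul_eq_sum_range (by simp [partitionSum, weight, doubleFactorialRatio])
    two_mul_mul_partitionSum two_mul_mul_doubleFactorialRatio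

end PartitionDoubleFactorial

open PartitionDoubleFactorial in
theorem partition_double_factorial_identity_general (k : ℕ) :
    ∑ P : Nat.Partition k,
      ((2 : ℚ) ^ k * (Nat.factorial k : ℚ)) /
        ∏ i ∈ Finset.range k,
          ((2 * ((i : ℚ) + 1)) ^ (Multiset.count (i + 1) P.parts) *
            (Nat.factorial (Multiset.count (i + 1) P.parts) : ℚ)) =
      (Nat.doubleFactorial (2 * k - 1) : ℚ) := by
  simp_rw [prod_range_eq_weight, div_eq_mul_inv]
  rw [← mul_sum, ← partitionSum, partitionSum_eq_doubleFactorialRatio, doubleFactorialRatio,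
    doubleFactorial_two_mul]
  push_cast
  field_simp

/-- `∑_{λ₁+2λ₂+⋯+kλ_k = k} (2^k k!)/(∏_{i=1}^k (2i)^{λ_i} λ_i!) = (2k−1)!!`, where the sum
is over partitions of `k` encoded by their multiplicities `λ_i = count i`. -/
theorem partition_double_factorial_identity (k : ℕ) (hk : 1 ≤ k) :
    ∑ P : Nat.Partition k,
      ((2 : ℚ) ^ k * (Nat.factorial k : ℚ)) /
        ∏ i ∈ Finset.range k,
          ((2 * ((i : ℚ) + 1)) ^ (Multiset.count (i + 1) P.parts) *
            (Nat.factorial (Multiset.count (i + 1) P.parts) : ℚ)) =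
      (Nat.doubleFactorial (2 * k - 1) : ℚ) :=
  partition_double_factorial_identity_general k
end

section
/- (Key Lemma) For every σ ∈ S_{2k}, there exist τ, τ_1 ∈ K and g, g_1 ∈ S_k such that σ·τ·ḡ·σ^{-1} = τ_1·ḡ_1 and sgn(τ_1)·sgn(g)·sgn(g_1) = −1. -/
/-- `K ≤ S_{2k}`: the subgroup generated by the transpositions `(2s−1, 2s)`, `s = 1,…,k`. -/
def Ksub (k : ℕ) : Subgroup (Equiv.Perm (Fin (2 * k))) :=
  Subgroup.closure
    { τ | ∃ s : Fin k, τ = Equiv.swap (pairEquiv k (s, 0)) (pairEquiv k (s, 1)) }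

/-- `H ≤ S_{2k}`: the subgroup generated by the transpositions `(2s−1, 2s)` together with
all `ḡ` for `g ∈ S_k`. -/
def Hsub (k : ℕ) : Subgroup (Equiv.Perm (Fin (2 * k))) :=
  Subgroup.closure
    ({ τ | ∃ s : Fin k, τ = Equiv.swap (pairEquiv k (s, 0)) (pairEquiv k (s, 1)) } ∪
      { τ | ∃ g : Equiv.Perm (Fin k), τ = barPerm g })

open Equiv Equiv.Perm Function

theorem sign_sumComm_self (γ : Type*) [Fintype γ] [DecidableEq γ] :
    sign (sumComm γ γ) = (-1) ^ Fintype.card γ := by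
  rw [sign_eq_sign_of_equiv _ (prodCongrLeft fun _ : γ => swap false true)
    (boolProdEquivSum γ).symm (by rintro (x | x) <;> rfl), sign_prodCongrLeft]
  simp

theorem sign_addRight_one (n : ℕ) [NeZero n] : sign (Equiv.addRight (1 : ZMod n)) = -(-1) ^ n := by
  rw [← sign_eq_sign_of_equiv (finRotate n) _ (ZMod.finEquiv n).toEquiv
    (fun i => by simp [finRotate_apply]), sign_finRotate]
  obtain ⟨m, rfl⟩ := Nat.exists_eq_succ_of_ne_zero (NeZero.ne n)
  simp [pow_succ]

section Dihedral

variable {α : Type*} {u v : Perm α}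

theorem Function.Involutive.perm_mul_self {w : Perm α} (hw : Involutive w) : w * w = 1 :=
  Equiv.ext hw

theorem mul_zpow_mul_eq_zpow_neg_mul (hu : Involutive u) (hv : Involutive v) (m : ℤ) :
    u * (u * v) ^ m = (u * v) ^ (-m) * u := by
  have h : SemiconjBy u (u * v) (u * v)⁻¹ := by
    rw [SemiconjBy, ← mul_assoc, hu.perm_mul_self, one_mul, mul_inv_rev, inv_mul_cancel_right,
      inv_eq_of_mul_eq_one_right hv.perm_mul_self]
  rw [h.zpow_right m, inv_zpow']

theorem zpow_mul_apply_ne_apply (hu : Involutive u) (hv : Involutive v) (hu' : ∀ x, u x ≠ x)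
    (hv' : ∀ x, v x ≠ x) (a : α) (d : ℤ) : ((u * v) ^ d) a ≠ u a := by
  intro hd
  -- Writing `d = 2 * m + j` with `j ∈ {0, 1}`, the involution `u * (u * v) ^ j`, which is `u` or
  -- `v`, would fix `((u * v) ^ m) a`.
  have hfix : ∀ j m : ℤ, (u * (u * v) ^ j) (((u * v) ^ m) a) = ((u * v) ^ (d - m - j)) a := by
    intro j m
    rw [← mul_apply, mul_assoc, ← zpow_add, mul_zpow_mul_eq_zpow_neg_mul hu hv, mul_apply, ← hd,
      ← mul_apply, ← zpow_add]
    ring_nf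
  obtain ⟨m, hm | hm⟩ : ∃ m, d = 2 * m ∨ d = 2 * m + 1 := ⟨d / 2, by omega⟩
  · have h := hfix 0 m
    rw [zpow_zero, mul_one, show d - m - 0 = m by omega] at h
    exact hu' _ h
  · have hv_eq : u * (u * v) ^ (1 : ℤ) = v := by
      rw [zpow_one, ← mul_assoc, hu.perm_mul_self, one_mul]
    have h := hfix 1 m
    rw [hv_eq, show d - m - 1 = m by omega] at h
    exact hv' _ h

open MulAction in
theorem exists_dihedral_embedding [Finite α] [Nonempty α] (hu : Involutive u) (hv : Involutive v)
    (hu' : ∀ x, u x ≠ x) (hv' : ∀ x, v x ≠ x) :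
    ∃ (n : ℕ) (_ : NeZero n) (e : ZMod n ⊕ ZMod n ↪ α),
      (∀ i, u (e (.inl i)) = e (.inr (-i))) ∧ ∀ i, v (e (.inl i)) = e (.inr (-1 - i)) := by
  obtain ⟨a⟩ := ‹Nonempty α›
  set r := u * v
  set n := minimalPeriod (r • ·) a
  let pt : ZMod n → α := fun i => (orbitZPowersEquiv r a).symm i
  have pt_intCast (m : ℤ) : pt m = (r ^ m) a :=
    congrArg Subtype.val (orbitZPowersEquiv_symm_apply' r a m)
  have pt_injective : Injective pt :=
    Subtype.val_injective.comp (orbitZPowersEquiv r a).symm.injective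
  have pt_ne_u_pt (i j : ZMod n) : pt i ≠ u (pt j) := by
    obtain ⟨i, rfl⟩ := ZMod.intCast_surjective i
    obtain ⟨j, rfl⟩ := ZMod.intCast_surjective j
    rw [pt_intCast, pt_intCast, ← mul_apply u, mul_zpow_mul_eq_zpow_neg_mul hu hv, mul_apply]
    intro h
    apply zpow_mul_apply_ne_apply hu hv hu' hv' a (j + i)
    rw [zpow_add, mul_apply, h, ← mul_apply, ← zpow_add, add_neg_cancel, zpow_zero, one_apply]
  have v_eq : v = u * r := by rw [← mul_assoc, hu.perm_mul_self, one_mul]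
  -- `inl i ↦ r ^ i a` and `inr i ↦ u (r ^ (-i) a) = r ^ i (u a)`: the two `r`-orbits making up
  -- the `⟨u, v⟩`-orbit of `a`.
  refine ⟨n, inferInstance, ⟨Sum.elim pt fun i => u (pt (-i)), pt_injective.sumElim
    (u.injective.comp (pt_injective.comp neg_injective)) fun i j => pt_ne_u_pt i (-j)⟩,
    fun i => ?_, fun i => ?_⟩
  · simp
  · obtain ⟨m, rfl⟩ := ZMod.intCast_surjective i
    have : -(-1 - (m : ZMod n)) = ((1 + m : ℤ) : ZMod n) := by push_cast; ring
    simp only [Embedding.coeFn_mk, Sum.elim_inl, Sum.elim_inr, this, pt_intCast, v_eq,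
      mul_apply, zpow_add, zpow_one]

end Dihedral

theorem exists_perm_apply_viaFintypeEmbedding_sumComm {α β γ : Type*} [DecidableEq α]
    [Fintype β] [DecidableEq β] [Fintype γ] [DecidableEq γ] (e : γ ⊕ γ ↪ α) {w : Perm α} {b : α → β}
    (hb : ∀ x y, b x = b y ↔ y = x ∨ y = w x) {ρ : Perm γ} (hρ : Involutive ρ)
    (hw : ∀ i, w (e (.inl i)) = e (.inr (ρ i))) :
    ∃ G : Perm β, sign G = sign ρ ∧
      ∀ x, b (Perm.viaFintypeEmbedding (sumComm γ γ) e x) = G (b x) := by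
  have b_w (x : α) : b (w x) = b x := ((hb x (w x)).2 (.inr rfl)).symm
  let F (i : γ) : β := b (e (.inl i))
  have b_inr (i : γ) : b (e (.inr i)) = F (ρ i) := by
    simpa only [hw, hρ i] using b_w (e (.inl (ρ i)))
  have F_injective : Injective F := by
    intro i j h
    rcases (hb _ _).1 h with h | h
    · exact (Sum.inl_injective (e.injective h)).symm
    · rw [hw] at h
      exact absurd (e.injective h) Sum.inl_ne_inr
  let F' : γ ↪ β := ⟨F, F_injective⟩
  refine ⟨ρ.viaFintypeEmbedding F', viaFintypeEmbedding_sign _ _, fun x => ?_⟩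
  by_cases hx : x ∈ Set.range e
  · obtain ⟨i | i, rfl⟩ := hx
    · rw [viaFintypeEmbedding_apply_image, sumComm_apply, Sum.swap_inl, b_inr]
      exact (viaFintypeEmbedding_apply_image ρ F' i).symm
    · rw [viaFintypeEmbedding_apply_image, sumComm_apply, Sum.swap_inr, b_inr]
      exact (hρ i ▸ viaFintypeEmbedding_apply_image ρ F' (ρ i)).symm
  · rw [viaFintypeEmbedding_apply_notMem_range _ _ hx, viaFintypeEmbedding_apply_notMem_range]
    rintro ⟨i, hi⟩
    rcases (hb _ _).1 hi with rfl | rfl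
    · exact hx ⟨.inl i, rfl⟩
    · exact hx ⟨.inr (ρ i), (hw i).symm⟩

section Pairs

variable {k : ℕ}

def pairBlock (x : Fin (2 * k)) : Fin k := ((pairEquiv k).symm x).1

variable (k) in
def pairSwap : Perm (Fin (2 * k)) :=
  (pairEquiv k).permCongr (prodCongr (Equiv.refl (Fin k)) (swap 0 1))

@[simp]
theorem pairBlock_pairEquiv (p : Fin k × Fin 2) : pairBlock (pairEquiv k p) = p.1 := by
  simp [pairBlock]

theorem pairSwap_pairEquiv (s : Fin k) (r : Fin 2) :
    pairSwap k (pairEquiv k (s, r)) = pairEquiv k (s, swap 0 1 r) := by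
  simp [pairSwap, permCongr_apply]

theorem pairBlock_eq_pairBlock_iff {x y : Fin (2 * k)} :
    pairBlock x = pairBlock y ↔ y = x ∨ y = pairSwap k x := by
  obtain ⟨⟨s, r⟩, rfl⟩ := (pairEquiv k).surjective x
  obtain ⟨⟨t, q⟩, rfl⟩ := (pairEquiv k).surjective y
  simp only [pairBlock_pairEquiv, pairSwap_pairEquiv, (pairEquiv k).injective.eq_iff,
    Prod.mk.injEq]
  constructor
  · rintro rfl
    fin_cases r <;> fin_cases q <;> simp
  · rintro (⟨rfl, -⟩ | ⟨rfl, -⟩) <;> rfl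

theorem pairSwap_involutive : Involutive (pairSwap k) := by
  intro x
  obtain ⟨⟨s, r⟩, rfl⟩ := (pairEquiv k).surjective x
  simp [pairSwap_pairEquiv]

theorem pairSwap_apply_ne (x : Fin (2 * k)) : pairSwap k x ≠ x := by
  obtain ⟨⟨s, r⟩, rfl⟩ := (pairEquiv k).surjective x
  rw [pairSwap_pairEquiv, Ne, (pairEquiv k).injective.eq_iff, Prod.mk.injEq]
  fin_cases r <;> simp

theorem pairBlock_barPerm (g : Perm (Fin k)) (x : Fin (2 * k)) :
    pairBlock (barPerm g x) = g (pairBlock x) := by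
  simp [barPerm, pairBlock, permCongr_apply]

theorem sign_barPerm (g : Perm (Fin k)) : sign (barPerm g) = 1 := by
  have : prodCongr g (Equiv.refl (Fin 2)) = prodCongrLeft fun _ => g := rfl
  rw [barPerm, sign_permCongr, this, sign_prodCongrLeft]
  simp

theorem swap_pairSwap_mem_Ksub (x : Fin (2 * k)) : swap x (pairSwap k x) ∈ Ksub k := by
  obtain ⟨⟨s, r⟩, rfl⟩ := (pairEquiv k).surjective x
  apply Subgroup.subset_closure
  refine ⟨s, ?_⟩
  fin_cases r
  · simp [pairSwap_pairEquiv]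
  · simp [pairSwap_pairEquiv, swap_comm]

theorem pairBlock_swap_pairSwap (x y : Fin (2 * k)) :
    pairBlock (swap x (pairSwap k x) y) = pairBlock y := by
  have hx : pairBlock (pairSwap k x) = pairBlock x :=
    (pairBlock_eq_pairBlock_iff.2 (.inr rfl)).symm
  rcases eq_or_ne y x with rfl | h1
  · rw [swap_apply_left, hx]
  rcases eq_or_ne y (pairSwap k x) with rfl | h2
  · rw [swap_apply_right, hx]
  · rw [swap_apply_of_ne_of_ne h1 h2]

theorem mem_Ksub_of_pairBlock_apply {π : Perm (Fin (2 * k))}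
    (hπ : ∀ x, pairBlock (π x) = pairBlock x) : π ∈ Ksub k := by
  induction h : π.support.card using Nat.strong_induction_on generalizing π with
  | _ m ih =>
  by_cases hπ1 : π = 1
  · exact hπ1 ▸ (Ksub k).one_mem
  obtain ⟨x, hx⟩ : ∃ x, π x ≠ x := by
    by_contra! h
    exact hπ1 (Equiv.ext h)
  have hπx : π x = pairSwap k x := (pairBlock_eq_pairBlock_iff.1 (hπ x).symm).resolve_left hx
  rw [← swap_mul_self_mul x (π x) π]
  refine (Ksub k).mul_mem (hπx ▸ swap_pairSwap_mem_Ksub x) (ih _ (h ▸ card_support_swap_mul hx)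
    (fun y => ?_) rfl)
  rw [mul_apply, hπx, pairBlock_swap_pairSwap, hπ]

theorem mul_inv_barPerm_mem_Ksub {w : Perm (Fin (2 * k))} {g : Perm (Fin k)}
    (h : ∀ x, pairBlock (w x) = g (pairBlock x)) : w * (barPerm g)⁻¹ ∈ Ksub k :=
  mem_Ksub_of_pairBlock_apply fun x => by
    rw [mul_apply, h, ← pairBlock_barPerm]
    exact congrArg pairBlock ((barPerm g).apply_symm_apply x)

end Pairs

/-- Key Lemma: for every `σ ∈ S_{2k}` there are `τ, τ₁ ∈ K` and `g, g₁ ∈ S_k` with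
`σ τ ḡ σ⁻¹ = τ₁ ḡ₁` and `sgn(τ₁) sgn(g) sgn(g₁) = −1`. -/
theorem key_lemma (k : ℕ) (hk : 0 < k) (σ : Equiv.Perm (Fin (2 * k))) :
    ∃ τ ∈ Ksub k, ∃ τ₁ ∈ Ksub k, ∃ g g₁ : Equiv.Perm (Fin k),
      σ * τ * barPerm g * σ⁻¹ = τ₁ * barPerm g₁ ∧
        (Equiv.Perm.sign τ₁ : ℤ) * (Equiv.Perm.sign g : ℤ) * (Equiv.Perm.sign g₁ : ℤ) = -1 := by
  have : Nonempty (Fin (2 * k)) := ⟨⟨0, by omega⟩⟩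
  set v := σ⁻¹ * pairSwap k * σ
  have hv : Involutive v := fun x => by simp [v, pairSwap_involutive _]
  have hv' (x : Fin (2 * k)) : v x ≠ x := fun h => pairSwap_apply_ne (σ x) (σ.symm_apply_eq.1 h)
  obtain ⟨n, _, e, hue, hve⟩ :=
    exists_dihedral_embedding pairSwap_involutive hv pairSwap_apply_ne hv'
  set π := Perm.viaFintypeEmbedding (sumComm (ZMod n) (ZMod n)) e
  obtain ⟨g, hg_sign, hg⟩ := exists_perm_apply_viaFintypeEmbedding_sumComm e
    (fun x y => pairBlock_eq_pairBlock_iff) (ρ := Equiv.neg _) neg_neg hue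
  obtain ⟨g₁, hg₁_sign, hg₁⟩ := exists_perm_apply_viaFintypeEmbedding_sumComm e
    (b := pairBlock ∘ σ) (fun x y => by simp [pairBlock_eq_pairBlock_iff, v, Equiv.eq_symm_apply])
    (ρ := Equiv.subLeft (-1)) (sub_sub_cancel _) hve
  refine ⟨π * (barPerm g)⁻¹, mul_inv_barPerm_mem_Ksub hg,
    σ * π * σ⁻¹ * (barPerm g₁)⁻¹, mul_inv_barPerm_mem_Ksub fun x => by simpa using hg₁ (σ⁻¹ x),
    g, g₁, by group, ?_⟩
  have hτ₁ : sign (σ * π * σ⁻¹ * (barPerm g₁)⁻¹) = (-1) ^ n := by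
    simp only [π, Perm.sign_mul, sign_inv, sign_barPerm, viaFintypeEmbedding_sign,
      sign_sumComm_self, ZMod.card, mul_one]
    rw [mul_right_comm, Int.units_mul_self, one_mul]
  have hρ : Equiv.neg (ZMod n) * Equiv.subLeft (-1) = Equiv.addRight 1 := by
    ext i
    simp
  have hsign : sign (σ * π * σ⁻¹ * (barPerm g₁)⁻¹) * sign g * sign g₁ = -1 := by
    rw [hτ₁, mul_assoc, hg_sign, hg₁_sign, ← map_mul, hρ, sign_addRight_one, mul_neg,
      Int.units_mul_self]
  rw [← Units.val_mul, ← Units.val_mul, hsign, Units.val_neg, Units.val_one]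
end
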